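/- arXiv:1412.7260 — 3 statements merged into one kernel-verified Lean document; each statement's English description precedes it below -/
import Mathlib

section
/- Let r, μ, ε, γ, δ > 0 with μ + ε < r, and define β = (1 + 3r/(r − (μ+ε))) · (γ/2) + δ. Then for any t ≥ (β − γ/2)ε one has t/r < (t − (3γ/2)ε)/(μ + ε). -/
open scoped BigOperators

/-- Euclidean (ℓ2) norm of a vector. -/
noncomputable def l2 {n : ℕ} (v : Fin n → ℝ) : ℝ := Real.sqrt (∑ i, (v i) ^ 2)

/-- ℓ1 norm of a vector. -/
noncomputable def l1 {n : ℕ} (v : Fin n → ℝ) : ℝ := ∑ i, |v i|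

/-- Matrix-vector product, where the matrix is given by its columns. -/
noncomputable def mv {n N : ℕ} (A : Fin N → Fin n → ℝ) (c : Fin N → ℝ) : Fin n → ℝ :=
  ∑ j, c j • A j

/-- Euclidean inner product. -/
noncomputable def dot {n : ℕ} (v w : Fin n → ℝ) : ℝ := ∑ i, v i * w i

/-- Symmetrized convex hull of the columns of `X`. -/
def symmHull {n N : ℕ} (X : Fin N → Fin n → ℝ) : Set (Fin n → ℝ) :=
  convexHull ℝ (Set.range X ∪ Set.range (fun j => -X j))

theorem div_lt_sub_div_of_mul_lt {r s t c : ℝ} (hr : 0 < r) (hs : 0 < s)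
    (h : c * r < t * (r - s)) : t / r < (t - c) / s := by
  rw [div_lt_div_iff₀ hr hs]
  linarith

theorem stmt_4_general (r μ ε γ δ : ℝ) (hr : 0 < r) (hμ : 0 < μ) (hε : 0 < ε)
    (hδ : 0 < δ) (hsep : μ + ε < r)
    (β : ℝ) (hβ : β = (1 + 3 * r / (r - (μ + ε))) * (γ / 2) + δ)
    (t : ℝ) (ht : (β - γ / 2) * ε ≤ t) :
    t / r < (t - (3 * γ / 2) * ε) / (μ + ε) := by
  have hgap : 0 < r - (μ + ε) := sub_pos.mpr hsep
  refine div_lt_sub_div_of_mul_lt hr (by positivity) ?_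
  -- The `δ` in `β` is exactly what makes the inequality strict.
  calc 3 * γ / 2 * ε * r < 3 * γ / 2 * ε * r + δ * ε * (r - (μ + ε)) := by
        have := mul_pos (mul_pos hδ hε) hgap
        linarith
    _ = (β - γ / 2) * ε * (r - (μ + ε)) := by
        rw [hβ]
        field_simp
        ring
    _ ≤ t * (r - (μ + ε)) := by gcongr

/-- the key scalar inequality of Step 3. -/
theorem stmt_4 (r μ ε γ δ : ℝ) (hr : 0 < r) (hμ : 0 < μ) (hε : 0 < ε)
    (hγ : 0 < γ) (hδ : 0 < δ) (hsep : μ + ε < r)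
    (β : ℝ) (hβ : β = (1 + 3 * r / (r - (μ + ε))) * (γ / 2) + δ)
    (t : ℝ) (ht : (β - γ / 2) * ε ≤ t) :
    t / r < (t - (3 * γ / 2) * ε) / (μ + ε) :=
  stmt_4_general r μ ε γ δ hr hμ hε hδ hsep β hβ t ht
end

section
/- Deterministic null-space property: Let S be a subspace of R^n spanned by unit vectors x_1,...,x_{N_i} (columns of X_i) with inradius r > 0, and suppose μ + ε < r where μ + ε bounds |uᵀ y| for every unit vector u ∈ S and every column y of Y_{-i}. Fix γ > 0 and set β = (1 + 3r/(r − (μ+ε)))(γ/2) + δ with δ > 0. Let ỹ = x̃ + z̃ with x̃ ∈ S, ‖z̃‖₂ ≤ (γ/2)ε, and ‖ỹ‖₂ > βε. Then the minimum of ‖a‖₁ subject to ‖ỹ − X_i a‖₂ ≤ (γ/2)ε is strictly less than the minimum of ‖a‖₁ subject to ‖ỹ − Y_{-i} a‖₂ ≤ γε (the latter minimum taken to be +∞ if infeasible). -/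
open scoped BigOperators

/-! Since the symmetrized hull of the columns of `X_i` contains the radius-`r` ball of `S`,
`x̃` is a combination of those columns of ℓ1 cost at most `‖x̃‖₂ / r`, and it fits `ỹ` up to
the noise `z̃`. On the other side `u = x̃ / ‖x̃‖₂` is a dual certificate: `⟪u, ỹ⟫ ≥ ‖x̃‖₂ - γε/2`,
while `|⟪u, y⟫| ≤ μ + ε` for every column `y` of `Y_{-i}`, so every `a` feasible for the second
problem has `‖a‖₁ ≥ (‖x̃‖₂ - 3γε/2) / (μ + ε)`. The lower bound on `‖ỹ‖₂` is what puts the first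
bound strictly below the second. -/

section Euclidean

variable {n : ℕ}

lemma l2_eq_norm (v : Fin n → ℝ) : l2 v = ‖WithLp.toLp 2 v‖ := by
  simp [l2, EuclideanSpace.norm_eq]

lemma dot_eq_inner (v w : Fin n → ℝ) : dot v w = inner ℝ (WithLp.toLp 2 v) (WithLp.toLp 2 w) := by
  simp [dot, PiLp.inner_apply, mul_comm]

lemma l2_nonneg (v : Fin n → ℝ) : 0 ≤ l2 v := Real.sqrt_nonneg _

lemma l2_smul (c : ℝ) (v : Fin n → ℝ) : l2 (c • v) = |c| * l2 v := by
  rw [l2_eq_norm, l2_eq_norm, WithLp.toLp_smul, norm_smul, Real.norm_eq_abs]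

lemma l2_eq_zero {v : Fin n → ℝ} : l2 v = 0 ↔ v = 0 := by
  rw [l2_eq_norm, norm_eq_zero, WithLp.toLp_eq_zero]

lemma l2_add_le (v w : Fin n → ℝ) : l2 (v + w) ≤ l2 v + l2 w := by
  simpa only [l2_eq_norm, WithLp.toLp_add] using norm_add_le _ _

lemma abs_dot_le_l2_mul_l2 (v w : Fin n → ℝ) : |dot v w| ≤ l2 v * l2 w := by
  rw [dot_eq_inner, l2_eq_norm, l2_eq_norm]
  exact abs_real_inner_le_norm _ _

lemma dot_self (v : Fin n → ℝ) : dot v v = l2 v * l2 v := by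
  rw [dot_eq_inner, l2_eq_norm]
  exact real_inner_self_eq_norm_mul_norm _

lemma dot_add_right (u v w : Fin n → ℝ) : dot u (v + w) = dot u v + dot u w := by
  simp [dot, mul_add, Finset.sum_add_distrib]

lemma dot_smul_left (c : ℝ) (v w : Fin n → ℝ) : dot (c • v) w = c * dot v w := by
  simp [dot, Finset.mul_sum, mul_assoc]

end Euclidean

section Columns

variable {n N : ℕ}

lemma mv_eq_linearCombination (A : Fin N → Fin n → ℝ) :
    mv A = Fintype.linearCombination ℝ A := by
  ext c : 1
  rw [Fintype.linearCombination_apply, mv]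

lemma dot_mv (u : Fin n → ℝ) (A : Fin N → Fin n → ℝ) (a : Fin N → ℝ) :
    dot u (mv A a) = ∑ j, a j * dot u (A j) := by
  simp only [dot, mv, Finset.sum_apply, Pi.smul_apply, smul_eq_mul, Finset.mul_sum]
  rw [Finset.sum_comm]
  exact Finset.sum_congr rfl fun j _ => Finset.sum_congr rfl fun i _ => by ring

lemma l1_smul (c : ℝ) (a : Fin N → ℝ) : l1 (c • a) = |c| * l1 a := by
  simp [l1, abs_mul, Finset.mul_sum]

lemma l1_add_le (a b : Fin N → ℝ) : l1 (a + b) ≤ l1 a + l1 b := by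
  rw [l1, l1, l1, ← Finset.sum_add_distrib]
  exact Finset.sum_le_sum fun j _ => abs_add_le _ _

lemma abs_dot_mv_le {u : Fin n → ℝ} {A : Fin N → Fin n → ℝ} {c : ℝ}
    (hA : ∀ j, |dot u (A j)| ≤ c) (a : Fin N → ℝ) : |dot u (mv A a)| ≤ c * l1 a := by
  rw [dot_mv, l1, Finset.mul_sum]
  refine (Finset.abs_sum_le_sum_abs _ _).trans (Finset.sum_le_sum fun j _ => ?_)
  rw [abs_mul, mul_comm c]
  exact mul_le_mul_of_nonneg_left (hA j) (abs_nonneg _)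

lemma convex_mv_image_l1_le_one (A : Fin N → Fin n → ℝ) :
    Convex ℝ (mv A '' {a | l1 a ≤ 1}) := by
  rw [mv_eq_linearCombination]
  refine Convex.linear_image (fun a ha b hb s t hs ht hst => ?_) _
  calc l1 (s • a + t • b) ≤ s * l1 a + t * l1 b := by
        simpa only [l1_smul, abs_of_nonneg hs, abs_of_nonneg ht] using l1_add_le (s • a) (t • b)
    _ ≤ s * 1 + t * 1 := by gcongr <;> assumption
    _ = 1 := by rw [mul_one, mul_one, hst]

lemma symmHull_subset_mv_image (A : Fin N → Fin n → ℝ) :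
    symmHull A ⊆ mv A '' {a | l1 a ≤ 1} := by
  classical
  refine convexHull_min ?_ (convex_mv_image_l1_le_one A)
  rintro _ (⟨j, rfl⟩ | ⟨j, rfl⟩)
  · exact ⟨Pi.single j 1, by simp [l1, Pi.single_apply, apply_ite], by simp [mv]⟩
  · exact ⟨Pi.single j (-1), by simp [l1, Pi.single_apply, apply_ite], by simp [mv]⟩

end Columns

section Normalize

variable {n : ℕ}

lemma l2_inv_smul_self {x : Fin n → ℝ} (hx : x ≠ 0) : l2 ((l2 x)⁻¹ • x) = 1 := by
  have hpos : 0 < l2 x := (l2_nonneg x).lt_of_ne' (mt l2_eq_zero.mp hx)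
  rw [l2_smul, abs_inv, abs_of_pos hpos, inv_mul_cancel₀ hpos.ne']

lemma dot_inv_smul_self (x : Fin n → ℝ) : dot ((l2 x)⁻¹ • x) x = l2 x := by
  rw [dot_smul_left, dot_self, ← mul_assoc, inv_mul_mul_self]

lemma l2_sub_l2_le_dot_inv_smul {x : Fin n → ℝ} (hx : x ≠ 0) (z : Fin n → ℝ) :
    l2 x - l2 z ≤ dot ((l2 x)⁻¹ • x) (x + z) := by
  have hz := abs_dot_le_l2_mul_l2 ((l2 x)⁻¹ • x) z
  rw [l2_inv_smul_self hx, one_mul] at hz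
  rw [dot_add_right, dot_inv_smul_self]
  linarith [neg_abs_le (dot ((l2 x)⁻¹ • x) z)]

end Normalize

lemma exists_mv_eq_l1_le_div {n N : ℕ} {S : Submodule ℝ (Fin n → ℝ)} {X : Fin N → Fin n → ℝ}
    {r : ℝ} (hr : 0 < r) (hball : ∀ v ∈ S, l2 v ≤ r → v ∈ symmHull X)
    {v : Fin n → ℝ} (hv : v ∈ S) : ∃ a, mv X a = v ∧ l1 a ≤ l2 v / r := by
  obtain rfl | hv0 := eq_or_ne v 0
  · exact ⟨0, by simp [mv], by simp [l1, l2]⟩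
  have ht : 0 < l2 v := (l2_nonneg v).lt_of_ne' (mt l2_eq_zero.mp hv0)
  have hmem : (r / l2 v) • v ∈ symmHull X := by
    refine hball _ (S.smul_mem _ hv) ?_
    rw [l2_smul, abs_of_pos (div_pos hr ht), div_mul_cancel₀ _ ht.ne']
  obtain ⟨b, hb_l1, hb⟩ := symmHull_subset_mv_image X hmem
  refine ⟨(l2 v / r) • b, ?_, ?_⟩
  · rw [mv_eq_linearCombination, map_smul, ← mv_eq_linearCombination, hb, smul_smul,
      div_mul_div_cancel₀ hr.ne', div_self ht.ne', one_smul]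
  · rw [l1_smul, abs_of_pos (div_pos ht hr)]
    exact mul_le_of_le_one_right (div_pos ht hr).le hb_l1

lemma dot_le_add_mul_l1 {n M : ℕ} {u y : Fin n → ℝ} {Y : Fin M → Fin n → ℝ} {c η : ℝ}
    (hu : l2 u ≤ 1) (hY : ∀ m, |dot u (Y m)| ≤ c) {a : Fin M → ℝ}
    (ha : l2 (y - mv Y a) ≤ η) : dot u y ≤ η + c * l1 a := by
  have hres : dot u (y - mv Y a) ≤ η := calc
    dot u (y - mv Y a) ≤ l2 u * l2 (y - mv Y a) :=
      (le_abs_self _).trans (abs_dot_le_l2_mul_l2 _ _)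
    _ ≤ l2 (y - mv Y a) := mul_le_of_le_one_left (l2_nonneg _) hu
    _ ≤ η := ha
  have hfit : dot u (mv Y a) ≤ c * l1 a := (le_abs_self _).trans (abs_dot_mv_le hY a)
  rw [← sub_add_cancel y (mv Y a), dot_add_right]
  exact add_le_add hres hfit

lemma div_lt_sub_three_mul_div {r c η t : ℝ} (hc : 0 < c) (hcr : c < r)
    (ht : 3 * r / (r - c) * η < t) : t / r < (t - 3 * η) / c := by
  have hrc : 0 < r - c := sub_pos.mpr hcr
  rw [div_mul_eq_mul_div, div_lt_iff₀ hrc] at ht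
  rw [div_lt_div_iff₀ (hc.trans hcr) hc]
  nlinarith

lemma sInf_coe_image_lt_sInf_coe_image {α β : Type*} {f : α → ℝ} {g : β → ℝ}
    {A : Set α} {B : Set β} {p q : ℝ} (hA : ∃ a ∈ A, f a ≤ p) (hB : ∀ b ∈ B, q ≤ g b)
    (hpq : p < q) :
    sInf ((fun a => (f a : EReal)) '' A) < sInf ((fun b => (g b : EReal)) '' B) := by
  obtain ⟨a, ha, hfa⟩ := hA
  calc sInf ((fun a => (f a : EReal)) '' A) ≤ f a := sInf_le ⟨a, ha, rfl⟩
    _ ≤ p := EReal.coe_le_coe_iff.mpr hfa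
    _ < q := EReal.coe_lt_coe_iff.mpr hpq
    _ ≤ sInf ((fun b => (g b : EReal)) '' B) := by
      refine le_sInf ?_
      rintro _ ⟨b, hb, rfl⟩
      exact EReal.coe_le_coe_iff.mpr (hB b hb)

theorem stmt_5_general {n Ni M : ℕ} (S : Submodule ℝ (Fin n → ℝ))
    (Xi : Fin Ni → Fin n → ℝ) (Ymi : Fin M → Fin n → ℝ)
    (r μ ε γ δ : ℝ) (hr : 0 < r) (hμ : 0 ≤ μ) (hε : 0 < ε) (hγ : 0 < γ) (hδ : 0 < δ)
    (hball : ∀ v ∈ S, l2 v ≤ r → v ∈ symmHull Xi)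
    (hsep : μ + ε < r)
    (hinc : ∀ u ∈ S, l2 u = 1 → ∀ m, |dot u (Ymi m)| ≤ μ + ε)
    (β : ℝ) (hβ : β = (1 + 3 * r / (r - (μ + ε))) * (γ / 2) + δ)
    (yt xt zt : Fin n → ℝ) (hyt : yt = xt + zt) (hxt : xt ∈ S)
    (hzt : l2 zt ≤ (γ / 2) * ε) (hbig : β * ε < l2 yt) :
    sInf ((fun a : Fin Ni → ℝ => (l1 a : EReal)) ''
        {a | l2 (yt - mv Xi a) ≤ (γ / 2) * ε}) <
      sInf ((fun a : Fin M → ℝ => (l1 a : EReal)) ''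
        {a | l2 (yt - mv Ymi a) ≤ γ * ε}) := by
  have hc : 0 < μ + ε := by positivity
  have hgap : 3 * r / (r - (μ + ε)) * (γ / 2 * ε) < l2 xt := by
    have htri := l2_add_le xt zt
    rw [← hyt] at htri
    subst hβ
    linarith [mul_pos hδ hε]
  have hxt0 : xt ≠ 0 := by
    have hrc := sub_pos.mpr hsep
    intro h
    rw [l2_eq_zero.mpr h] at hgap
    exact hgap.not_ge (by positivity)
  obtain ⟨a₀, ha₀, ha₀l1⟩ := exists_mv_eq_l1_le_div hr hball hxt
  refine sInf_coe_image_lt_sInf_coe_image (p := l2 xt / r)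
    (q := (l2 xt - 3 * (γ / 2 * ε)) / (μ + ε)) ⟨a₀, ?_, ha₀l1⟩ (fun a ha => ?_)
    (div_lt_sub_three_mul_div hc hsep hgap)
  · simpa [ha₀, hyt] using hzt
  · have hu := l2_inv_smul_self hxt0
    have hlow := l2_sub_l2_le_dot_inv_smul hxt0 zt
    have hup := dot_le_add_mul_l1 hu.le (hinc _ (S.smul_mem _ hxt) hu) ha
    rw [← hyt] at hlow
    rw [div_le_iff₀ hc]
    linarith

/-- deterministic noisy multi-subspace null-space property. -/
theorem stmt_5 {n Ni M : ℕ} (S : Submodule ℝ (Fin n → ℝ))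
    (Xi : Fin Ni → Fin n → ℝ) (Ymi : Fin M → Fin n → ℝ)
    (hXS : ∀ j, Xi j ∈ S) (hXunit : ∀ j, l2 (Xi j) = 1)
    (hspan : Submodule.span ℝ (Set.range Xi) = S)
    (r μ ε γ δ : ℝ) (hr : 0 < r) (hμ : 0 ≤ μ) (hε : 0 < ε) (hγ : 0 < γ) (hδ : 0 < δ)
    (hball : ∀ v ∈ S, l2 v ≤ r → v ∈ symmHull Xi)
    (hsep : μ + ε < r)
    (hinc : ∀ u ∈ S, l2 u = 1 → ∀ m, |dot u (Ymi m)| ≤ μ + ε)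
    (β : ℝ) (hβ : β = (1 + 3 * r / (r - (μ + ε))) * (γ / 2) + δ)
    (yt xt zt : Fin n → ℝ) (hyt : yt = xt + zt) (hxt : xt ∈ S)
    (hzt : l2 zt ≤ (γ / 2) * ε) (hbig : β * ε < l2 yt) :
    sInf ((fun a : Fin Ni → ℝ => (l1 a : EReal)) ''
        {a | l2 (yt - mv Xi a) ≤ (γ / 2) * ε}) <
      sInf ((fun a : Fin M → ℝ => (l1 a : EReal)) ''
        {a | l2 (yt - mv Ymi a) ≤ γ * ε}) :=
  stmt_5_general S Xi Ymi r μ ε γ δ hr hμ hε hγ hδ hball hsep hinc β hβ yt xt zt hyt hxt hzt hbig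
end

section
/- Approximate support recovery, Step 3: Let c* = (c_i*, c_{-i}*) be optimal for min ‖c‖₁ s.t. ‖y − Y_i c_i − Y_{-i} c_{-i}‖₂ ≤ γε, and set ỹ = y − Y_i c_i*. Then ‖c_{-i}*‖₁ ≤ min{‖b‖₁ : ‖ỹ − Y_i b‖₂ ≤ γε}, provided this latter problem is feasible. -/
open scoped BigOperators

/-! If `b` fitted the residual `y - Yi ci` with `‖b‖₁ < ‖cmi‖₁`, then `(ci + b, 0)` would be
feasible for the full problem with `‖ci + b‖₁ + 0 ≤ ‖ci‖₁ + ‖b‖₁ < ‖ci‖₁ + ‖cmi‖₁`,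
contradicting the optimality of `(ci, cmi)`. -/

section

variable {n N : ℕ}

@[simp]
theorem l1_zero : l1 (0 : Fin n → ℝ) = 0 := by
  simp [l1]

theorem l1_add_le_s9 (v w : Fin n → ℝ) : l1 (v + w) ≤ l1 v + l1 w := by
  simp only [l1, Pi.add_apply, ← Finset.sum_add_distrib]
  exact Finset.sum_le_sum fun i _ => abs_add_le (v i) (w i)

@[simp]
theorem mv_zero (A : Fin N → Fin n → ℝ) : mv A 0 = 0 := by
  simp [mv]

theorem mv_add (A : Fin N → Fin n → ℝ) (c d : Fin N → ℝ) : mv A (c + d) = mv A c + mv A d := by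
  simp only [mv, Pi.add_apply, add_smul, Finset.sum_add_distrib]

end

theorem stmt_9_general {n Ni M : ℕ} (Yi : Fin Ni → Fin n → ℝ) (Ymi : Fin M → Fin n → ℝ)
    (y : Fin n → ℝ) (ε γ : ℝ)
    (ci : Fin Ni → ℝ) (cmi : Fin M → ℝ)
    (hopt : ∀ (di : Fin Ni → ℝ) (dmi : Fin M → ℝ),
      l2 (y - mv Yi di - mv Ymi dmi) ≤ γ * ε → l1 ci + l1 cmi ≤ l1 di + l1 dmi) :
    ∀ b : Fin Ni → ℝ, l2 ((y - mv Yi ci) - mv Yi b) ≤ γ * ε → l1 cmi ≤ l1 b := by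
  intro b hb
  have hshift_feasible : l2 (y - mv Yi (ci + b) - mv Ymi 0) ≤ γ * ε := by
    rwa [mv_add, mv_zero, sub_zero, ← sub_sub]
  have hshift_opt : l1 ci + l1 cmi ≤ l1 (ci + b) + l1 (0 : Fin M → ℝ) :=
    hopt (ci + b) 0 hshift_feasible
  linarith [l1_add_le_s9 ci b, l1_zero (n := M)]

/-- approximate support recovery, Step 3. -/
theorem stmt_9 {n Ni M : ℕ} (Yi : Fin Ni → Fin n → ℝ) (Ymi : Fin M → Fin n → ℝ)
    (y : Fin n → ℝ) (ε γ : ℝ)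
    (ci : Fin Ni → ℝ) (cmi : Fin M → ℝ)
    (hfeas : l2 (y - mv Yi ci - mv Ymi cmi) ≤ γ * ε)
    (hopt : ∀ (di : Fin Ni → ℝ) (dmi : Fin M → ℝ),
      l2 (y - mv Yi di - mv Ymi dmi) ≤ γ * ε → l1 ci + l1 cmi ≤ l1 di + l1 dmi) :
    ∀ b : Fin Ni → ℝ, l2 ((y - mv Yi ci) - mv Yi b) ≤ γ * ε → l1 cmi ≤ l1 b :=
  stmt_9_general Yi Ymi y ε γ ci cmi hopt
end
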